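/- arXiv:2307.05798 — 3 statements merged into one kernel-verified Lean document; each statement's English description precedes it below -/
import Mathlib

section
/- Any compact metric space X can be partitioned into finitely many ε-wide Borel sets for any fixed ε > 0; that is, there exist finitely many pairwise disjoint Borel sets Q₁, …, Q_k covering X such that each Q_j is contained in a ball of radius ε and contains a ball of radius ε/3. -/
open MeasureTheory Topology Filter Pointwise

noncomputable def wass {X : Type*} [MeasurableSpace X] [PseudoMetricSpace X]
    (ν₁ ν₂ : Measure X) : ℝ :=
  sInf {r | ∃ γ : Measure (X × X), IsProbabilityMeasure γ ∧
    γ.map Prod.fst = ν₁ ∧ γ.map Prod.snd = ν₂ ∧ r = ∫ p, dist p.1 p.2 ∂γ}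

def msupp {X : Type*} [TopologicalSpace X] [MeasurableSpace X] (μ : Measure X) : Set X :=
  {x | ∀ U : Set X, x ∈ U → IsOpen U → 0 < μ U}

noncomputable def mconv {A : Type*} [MeasurableSpace A] [Add A] (μ ν : Measure A) : Measure A :=
  (μ.prod ν).map (fun p => p.1 + p.2)

noncomputable def mconvPow {A : Type*} [MeasurableSpace A] [AddMonoid A]
    (μ : Measure A) : ℕ → Measure A
  | 0 => Measure.dirac 0
  | n + 1 => mconv μ (mconvPow μ n)

noncomputable def mconvProd {A : Type*} [MeasurableSpace A] [AddMonoid A] :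
    List (Measure A) → Measure A
  | [] => Measure.dirac 0
  | μ :: l => mconv μ (mconvProd l)

def StrictlyAperiodic {A : Type*} [MeasurableSpace A] [TopologicalSpace A] [AddGroup A]
    (μ : Measure A) : Prop :=
  closure (AddSubsemigroup.closure
    {x : A | ∃ a ∈ msupp μ, ∃ b ∈ msupp μ, x = a - b} : Set A) = Set.univ

open scoped NNReal ENNReal

theorem stmt6 {X : Type*} [MeasurableSpace X] [MetricSpace X] [CompactSpace X] [BorelSpace X]
    (ε : ℝ) (hε : 0 < ε) :
    ∃ (k : ℕ) (Q : Fin k → Set X),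
      (∀ j, MeasurableSet (Q j)) ∧
      (Pairwise fun i j => Disjoint (Q i) (Q j)) ∧
      (⋃ j, Q j) = Set.univ ∧
      (∀ j, (∃ c : X, Q j ⊆ Metric.ball c ε) ∧ (∃ c : X, Metric.ball c (ε / 3) ⊆ Q j)) := by
  classical
  rcases isEmpty_or_nonempty X with hX | hX
  · refine ⟨0, fun _ => ∅, fun j => j.elim0, fun i => i.elim0, ?_, fun j => j.elim0⟩
    rw [Set.univ_eq_empty_iff.2 hX]
    simp
  -- finite cover by balls of radius ε/3
  obtain ⟨t, -, tfin, tcov⟩ :=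
    finite_cover_balls_of_compact (isCompact_univ : IsCompact (Set.univ : Set X))
      (show (0:ℝ) < ε/3 by linarith)
  have hcov : ∀ x : X, ∃ y ∈ t, dist x y < ε/3 := by
    intro x
    have := tcov (Set.mem_univ x)
    simpa [Metric.mem_ball] using this
  set g : X → X := fun x => (hcov x).choose with hg
  have hgspec : ∀ x : X, g x ∈ t ∧ dist x (g x) < ε/3 := by
    intro x
    obtain ⟨h1, h2⟩ := (hcov x).choose_spec
    exact ⟨h1, h2⟩
  -- separated sets
  set sep : Finset X → Prop := fun S => ∀ a ∈ S, ∀ b ∈ S, a ≠ b → 2*ε/3 ≤ dist a b with hsepdef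
  have hbound : ∀ S : Finset X, sep S → S.card ≤ tfin.toFinset.card := by
    intro S hS
    apply Finset.card_le_card_of_injOn g
    · intro a _
      simpa using (hgspec a).1
    · intro a ha b hb hab
      by_contra hne
      have h1 := (hgspec a).2
      have h2 := (hgspec b).2
      have := hS a ha b hb hne
      have : dist a b ≤ dist a (g a) + dist (g b) b := by
        rw [hab]; exact dist_triangle a (g b) b
      rw [dist_comm (g b) b] at this
      linarith [hS a ha b hb hne]
  set C : Set ℕ := {n | ∃ S : Finset X, sep S ∧ S.card = n} with hC
  have hC0 : 0 ∈ C := ⟨∅, by intro a ha; simp at ha, rfl⟩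
  have hCb : BddAbove C := ⟨tfin.toFinset.card, fun n ⟨S, hS, hn⟩ => hn ▸ hbound S hS⟩
  obtain ⟨S, hsep, hcard⟩ := Nat.sSup_mem ⟨0, hC0⟩ hCb
  -- maximality: every point is within 2ε/3 of some point of S
  have hmax : ∀ x : X, ∃ a ∈ S, dist x a < 2*ε/3 := by
    intro x
    by_contra h
    push_neg at h
    have hxS : x ∉ S := by
      intro hx
      have := h x hx
      simp at this
      linarith
    have hsep' : sep (insert x S) := by
      intro a ha b hb hab
      rcases Finset.mem_insert.1 ha with rfl | ha' <;>
        rcases Finset.mem_insert.1 hb with rfl | hb'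
      · exact absurd rfl hab
      · exact h b hb'
      · rw [dist_comm]; exact h a ha'
      · exact hsep a ha' b hb' hab
    have hmem : (insert x S).card ∈ C := ⟨_, hsep', rfl⟩
    have := le_csSup hCb hmem
    rw [Finset.card_insert_of_notMem hxS, hcard] at this
    omega
  -- enumerate S
  set k := S.card with hk
  set c : Fin k → X := fun j => (S.equivFin.symm j : X) with hcdef
  have hc_mem : ∀ j, c j ∈ S := fun j => (S.equivFin.symm j).2
  have hc_inj : Function.Injective c := fun i j h =>
    S.equivFin.symm.injective (Subtype.ext h)
  have hc_surj : ∀ a ∈ S, ∃ j, c j = a := fun a ha =>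
    ⟨S.equivFin ⟨a, ha⟩, by simp [hcdef]⟩
  have hsepc : ∀ i j, i ≠ j → 2*ε/3 ≤ dist (c i) (c j) := fun i j hij =>
    hsep _ (hc_mem i) _ (hc_mem j) (fun h => hij (hc_inj h))
  have hcovc : ∀ x : X, ∃ j, dist x (c j) < 2*ε/3 := by
    intro x
    obtain ⟨a, ha, hd⟩ := hmax x
    obtain ⟨j, rfl⟩ := hc_surj a ha
    exact ⟨j, hd⟩
  -- Voronoi cells with least-index tie-breaking
  set Q : Fin k → Set X := fun j =>
    {x | (∀ i, dist x (c j) ≤ dist x (c i)) ∧ ∀ i, i < j → dist x (c j) < dist x (c i)}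
    with hQdef
  refine ⟨k, Q, ?_, ?_, ?_, ?_⟩
  · -- measurability
    intro j
    have hQeq : Q j = (⋂ i, {x | dist x (c j) ≤ dist x (c i)}) ∩
        ⋂ i, ⋂ (_ : i < j), {x | dist x (c j) < dist x (c i)} := by
      ext x; simp [hQdef]
    rw [hQeq]
    have hm : ∀ i : Fin k, Measurable fun x : X => dist x (c i) := fun i =>
      measurable_id.dist measurable_const
    exact (MeasurableSet.iInter fun i => measurableSet_le (hm j) (hm i)).inter
      (MeasurableSet.iInter fun i => MeasurableSet.iInter fun _ =>
        measurableSet_lt (hm j) (hm i))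
  · -- pairwise disjoint
    intro i j hij
    rw [Set.disjoint_left]
    intro x hxi hxj
    rcases lt_or_gt_of_ne hij with h | h
    · exact absurd (hxi.1 j) (not_le.2 (hxj.2 i h))
    · exact absurd (hxj.1 i) (not_le.2 (hxi.2 j h))
  · -- cover
    ext x
    simp only [Set.mem_iUnion, Set.mem_univ, iff_true]
    obtain ⟨j0, hj0⟩ := hcovc x
    have hM : (Finset.univ.filter (fun j : Fin k => ∀ i, dist x (c j) ≤ dist x (c i))).Nonempty := by
      obtain ⟨j, -, hj⟩ := Finset.exists_min_image Finset.univ (fun i => dist x (c i))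
        ⟨j0, Finset.mem_univ j0⟩
      exact ⟨j, Finset.mem_filter.2 ⟨Finset.mem_univ j, fun i => hj i (Finset.mem_univ i)⟩⟩
    set M := Finset.univ.filter (fun j : Fin k => ∀ i, dist x (c j) ≤ dist x (c i))
    set j := M.min' hM with hjdef
    have hjmem : ∀ i, dist x (c j) ≤ dist x (c i) :=
      (Finset.mem_filter.1 (M.min'_mem hM)).2
    refine ⟨j, hjmem, fun i hi => ?_⟩
    have hiM : i ∉ M := fun hmem => absurd (M.min'_le i hmem) (not_le.2 hi)
    have : ¬ ∀ i', dist x (c i) ≤ dist x (c i') := by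
      intro h
      exact hiM (Finset.mem_filter.2 ⟨Finset.mem_univ i, h⟩)
    push_neg at this
    obtain ⟨i', hi'⟩ := this
    exact lt_of_le_of_lt (hjmem i') hi'
  · -- wideness
    intro j
    constructor
    · refine ⟨c j, fun x hx => ?_⟩
      obtain ⟨i, hi⟩ := hcovc x
      have := hx.1 i
      rw [Metric.mem_ball]
      calc dist x (c j) ≤ dist x (c i) := hx.1 i
        _ < 2*ε/3 := hi
        _ < ε := by linarith
    · refine ⟨c j, fun x hx => ?_⟩
      rw [Metric.mem_ball] at hx
      have key : ∀ i, i ≠ j → dist x (c j) < dist x (c i) := by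
        intro i hij
        have h1 : 2*ε/3 ≤ dist (c i) (c j) := hsepc i j hij
        have h2 : dist (c i) (c j) ≤ dist (c i) x + dist x (c j) := dist_triangle _ _ _
        rw [dist_comm (c i) x] at h2
        linarith
      exact ⟨fun i => by rcases eq_or_ne i j with rfl | h; · rfl
                         · exact le_of_lt (key i h),
             fun i hi => key i (ne_of_lt hi)⟩
end

section
/- Let A be a compact metrizable abelian group with shift-invariant metric and K a weak-* compact set of Borel probability measures on A such that every μ ∈ K is strictly aperiodic. Then for any ε > 0 there exists m ∈ ℕ such that for every sequence μ₁, μ₂, …, μ_m ∈ K, the support of the convolution μ_m * μ_{m−1} * … * μ₁ is ε-dense in A. -/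
open MeasureTheory Topology Filter Pointwise

open scoped NNReal ENNReal

set_option linter.unusedSectionVars false
set_option maxHeartbeats 1000000

section aux
variable {A : Type*} [MeasurableSpace A] [MetricSpace A] [AddCommGroup A]
    [IsTopologicalAddGroup A] [CompactSpace A] [BorelSpace A]

lemma msupp_compact_null {ν : Measure A} {C : Set A} (hC : IsCompact C)
    (h : ∀ q ∈ C, q ∉ msupp ν) : ν C = 0 := by
  have hU : ∀ q ∈ C, ∃ U : Set A, q ∈ U ∧ IsOpen U ∧ ν U = 0 := by
    intro q hq
    have := h q hq
    simp only [msupp, Set.mem_setOf_eq, not_forall] at this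
    obtain ⟨U, hqU, hUo, hpos⟩ := this
    exact ⟨U, hqU, hUo, by simpa using hpos⟩
  choose U hmem hopen hnull using hU
  obtain ⟨t, ht⟩ := hC.elim_nhds_subcover' (fun q hq => U q hq)
    (fun q hq => (hopen q hq).mem_nhds (hmem q hq))
  refine le_antisymm ?_ zero_le
  calc ν C ≤ ν (⋃ q ∈ t, U q q.2) := measure_mono ht
    _ ≤ ∑ q ∈ t, ν (U q q.2) := measure_biUnion_finset_le t _
    _ = 0 := by simp [hnull]

lemma msupp_nonempty (ν : Measure A) [IsProbabilityMeasure ν] : (msupp ν).Nonempty := by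
  by_contra h
  rw [Set.not_nonempty_iff_eq_empty] at h
  have : ν Set.univ = 0 := msupp_compact_null isCompact_univ (by simp [h])
  simp at this

lemma msupp_isClosed (ν : Measure A) : IsClosed (msupp ν) := by
  rw [← isOpen_compl_iff, isOpen_iff_forall_mem_open]
  intro x hx
  simp only [Set.mem_compl_iff, msupp, Set.mem_setOf_eq, not_forall] at hx
  obtain ⟨U, hxU, hUo, hpos⟩ := hx
  refine ⟨U, fun y hy => ?_, hUo, hxU⟩
  simp only [Set.mem_compl_iff, msupp, Set.mem_setOf_eq, not_forall]
  exact ⟨U, hy, hUo, hpos⟩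

lemma mem_msupp_mconv {μ ν : Measure A} [IsProbabilityMeasure μ] [IsProbabilityMeasure ν]
    {a b : A} (ha : a ∈ msupp μ) (hb : b ∈ msupp ν) : a + b ∈ msupp (mconv μ ν) := by
  intro U hU hUo
  have hmeas : Measurable (fun p : A × A => p.1 + p.2) := by measurability
  have hpre : IsOpen ((fun p : A × A => p.1 + p.2) ⁻¹' U) :=
    hUo.preimage (continuous_add)
  have hmemp : (a, b) ∈ ((fun p : A × A => p.1 + p.2) ⁻¹' U) := hU
  obtain ⟨V, W, hVo, hWo, haV, hbW, hsub⟩ := isOpen_prod_iff.mp hpre a b hmemp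
  rw [mconv, Measure.map_apply hmeas hUo.measurableSet]
  calc (0:ENNReal) < μ V * ν W :=
        ENNReal.mul_pos (ha V haV hVo).ne' (hb W hbW hWo).ne'
    _ = (μ.prod ν) (V ×ˢ W) := (Measure.prod_prod V W).symm
    _ ≤ (μ.prod ν) ((fun p : A × A => p.1 + p.2) ⁻¹' U) := measure_mono hsub

instance mconv_prob {μ ν : Measure A} [IsProbabilityMeasure μ] [IsProbabilityMeasure ν] :
    IsProbabilityMeasure (mconv μ ν) := by
  have hmeas : Measurable (fun p : A × A => p.1 + p.2) := by measurability
  exact Measure.isProbabilityMeasure_map hmeas.aemeasurable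

lemma mconvProd_prob {m : ℕ} (μs : Fin m → ProbabilityMeasure A) :
    IsProbabilityMeasure (mconvProd (List.ofFn fun i => (μs i : Measure A))) := by
  induction m with
  | zero => simp only [List.ofFn_zero, mconvProd]; exact Measure.dirac.isProbabilityMeasure
  | succ n ih =>
      rw [List.ofFn_succ]
      show IsProbabilityMeasure (mconv _ _)
      haveI := ih (fun i => μs i.succ)
      exact mconv_prob

lemma mem_msupp_mconvProd {m : ℕ} (μs : Fin m → ProbabilityMeasure A) (q : Fin m → A)
    (hq : ∀ i, q i ∈ msupp (μs i : Measure A)) :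
    (∑ i, q i) ∈ msupp (mconvProd (List.ofFn fun i => (μs i : Measure A))) := by
  induction m with
  | zero =>
      intro U hU hUo
      simp only [Finset.univ_eq_empty, Finset.sum_empty] at hU
      simp only [List.ofFn_zero, mconvProd]
      rw [Measure.dirac_apply' _ hUo.measurableSet]
      simp [Set.indicator_of_mem hU]
  | succ n ih =>
      rw [List.ofFn_succ, Fin.sum_univ_succ]
      show _ ∈ msupp (mconv _ _)
      have htail := ih (fun i => μs i.succ) (fun i => q i.succ) (fun i => hq i.succ)
      haveI : IsProbabilityMeasure (mconvProd (List.ofFn fun i : Fin n => ((μs i.succ : Measure A)))) :=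
        mconvProd_prob (fun i => μs i.succ)
      exact mem_msupp_mconv (hq 0) htail

end aux

section aux2
variable {A : Type*} [MetricSpace A] [AddCommGroup A] [CompactSpace A]

def nsum : ℕ → Set A → Set A
  | 0, _ => {0}
  | n+1, S => S + nsum n S

lemma nsum_add_mem {S : Set A} : ∀ {j k : ℕ} {x y : A}, x ∈ nsum j S → y ∈ nsum k S →
    x + y ∈ nsum (j + k) S := by
  intro j
  induction j with
  | zero => intro k x y hx hy; simp only [nsum, Set.mem_singleton_iff] at hx; subst hx;
            simpa using hy
  | succ n ih =>
      intro k x y hx hy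
      obtain ⟨s, hs, z, hz, rfl⟩ := hx
      have : z + y ∈ nsum (n + k) S := ih hz hy
      have h2 : s + (z + y) ∈ nsum (n + k + 1) S := Set.add_mem_add hs this
      have : n + 1 + k = n + k + 1 := by ring
      rw [this]
      convert h2 using 1
      exact add_assoc s z y

variable (hd : ∀ a x y : A, dist (x + a) (y + a) = dist x y)
include hd

lemma dist_add_add (a b c e : A) : dist (a + b) (c + e) ≤ dist a c + dist b e := by
  calc dist (a + b) (c + e) ≤ dist (a + b) (c + b) + dist (c + b) (c + e) := dist_triangle _ _ _
    _ = dist a c + dist b e := by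
        rw [hd b a c]
        congr 1
        rw [add_comm c b, add_comm c e, hd c b e]

lemma H_add_mem {T : Set A} {u v : A}
    (hu : u ∈ closure (⋃ n, nsum (n+1) T)) (hv : v ∈ closure (⋃ n, nsum (n+1) T)) :
    u + v ∈ closure (⋃ n, nsum (n+1) T) := by
  rw [Metric.mem_closure_iff] at *
  intro δ hδ
  obtain ⟨u', hu', hdu⟩ := hu (δ/2) (by linarith)
  obtain ⟨v', hv', hdv⟩ := hv (δ/2) (by linarith)
  obtain ⟨n, hn⟩ := Set.mem_iUnion.mp hu'
  obtain ⟨k, hk⟩ := Set.mem_iUnion.mp hv'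
  refine ⟨u' + v', Set.mem_iUnion.mpr ⟨n + k + 1, ?_⟩, ?_⟩
  · have := nsum_add_mem (A := A) hn hk
    convert this using 2
    ring
  · calc dist (u + v) (u' + v') ≤ dist u u' + dist v v' := dist_add_add hd _ _ _ _
      _ < δ := by linarith

lemma nsmul_mem_H {T : Set A} {g : A} (hg : g ∈ closure (⋃ n, nsum (n+1) T)) :
    ∀ n : ℕ, (n+1) • g ∈ closure (⋃ n, nsum (n+1) T) := by
  intro n
  induction n with
  | zero => simpa using hg
  | succ k ih =>
      have := H_add_mem hd hg ih
      rw [show k + 1 + 1 = k + 2 from rfl, succ_nsmul']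
      exact this

lemma neg_mem_H {T : Set A} {g : A} (hg : g ∈ closure (⋃ n, nsum (n+1) T)) :
    -g ∈ closure (⋃ n, nsum (n+1) T) := by
  set H := closure (⋃ n, nsum (n+1) T) with hH
  have hHc : IsClosed H := isClosed_closure
  suffices hsuf : -g ∈ closure H by rwa [hHc.closure_eq] at hsuf
  rw [Metric.mem_closure_iff]
  intro δ hδ
  obtain ⟨a, _, φ, hφ, hconv⟩ := isCompact_univ.tendsto_subseq
    (x := fun n => (n+1) • g) (fun n => Set.mem_univ _)
  rw [Metric.tendsto_atTop] at hconv
  obtain ⟨N, hN⟩ := hconv (δ/2) (by linarith)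
  set k := φ N
  set l := φ (N + 2)
  have hkl : k + 2 ≤ l := by
    have h2 : φ N < φ (N + 1) := hφ (by omega)
    have h3 : φ (N + 1) < φ (N + 2) := hφ (by omega)
    omega
  have hdist : dist ((l+1) • g) ((k+1) • g) < δ := by
    have h1 := hN N (le_refl N)
    have h2 := hN (N+2) (by omega)
    calc dist ((l+1) • g) ((k+1) • g) ≤ dist ((l+1) • g) a + dist a ((k+1) • g) := dist_triangle _ _ _
      _ < δ := by
          rw [dist_comm a] at *
          simp only [Function.comp] at h1 h2
          linarith [h1, h2]
  have key : dist ((l - k) • g) 0 < δ := by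
    have : (l + 1) • g = (l - k) • g + (k+1) • g := by
      rw [← add_nsmul]
      congr 1
      omega
    rw [this] at hdist
    calc dist ((l - k) • g) 0 = dist ((l-k) • g + (k+1) • g) (0 + (k+1) • g) := by
          rw [hd ((k+1) • g)]
      _ = dist ((l-k) • g + (k+1) • g) ((k+1) • g) := by rw [zero_add]
      _ < δ := hdist
  refine ⟨(l - k - 1) • g, ?_, ?_⟩
  · have h1 : l - k - 1 = (l - k - 2) + 1 := by omega
    rw [h1]
    exact nsmul_mem_H hd hg _
  · have : dist (-g) ((l - k - 1) • g) = dist 0 ((l - k) • g) := by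
      have h2 : (l - k - 1) • g + g = (l - k) • g := by
        rw [← succ_nsmul]
        congr 1
        omega
      calc dist (-g) ((l - k - 1) • g) = dist (-g + g) ((l - k - 1) • g + g) := (hd g _ _).symm
        _ = dist 0 ((l - k) • g) := by rw [neg_add_cancel, h2]
    rw [this, dist_comm]
    exact key

omit hd in
lemma nsum_mono {T : Set A} (h0 : (0:A) ∈ T) : ∀ {n k : ℕ}, n ≤ k →
    nsum (n+1) T ⊆ nsum (k+1) T := by
  have step : ∀ n : ℕ, nsum (n+1) T ⊆ nsum (n+2) T := by
    intro n x hx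
    have h2 : (0:A) + x ∈ T + nsum (n+1) T := Set.add_mem_add h0 hx
    simpa [nsum] using h2
  intro n k hnk
  induction k with
  | zero => have : n = 0 := by omega
            subst this; exact fun _ h => h
  | succ m ih =>
      rcases Nat.lt_or_ge n (m+1) with h | h
      · exact fun y hy => step m (ih (by omega) hy)
      · have : n = m + 1 := by omega
        subst this; exact fun _ h => h

omit hd in
lemma nsum_shift {S : Set A} {b : A} (hb : b ∈ S) : ∀ {k : ℕ} {p : A},
    p ∈ nsum k ((fun s => s - b) '' S) → p + k • b ∈ nsum k S := by
  intro k
  induction k with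
  | zero => intro p hp
            simp only [nsum, Set.mem_singleton_iff] at hp ⊢
            simp [hp]
  | succ n ih =>
      intro p hp
      obtain ⟨t, ht, q, hq, rfl⟩ := hp
      obtain ⟨s, hs, rfl⟩ := ht
      have h2 := ih hq
      have : (s - b + q) + (n+1) • b = s + (q + n • b) := by
        rw [succ_nsmul]
        abel
      rw [this]
      exact Set.add_mem_add hs h2

variable [MeasurableSpace A] [BorelSpace A] [IsTopologicalAddGroup A]

lemma claimA (μ : Measure A) [IsProbabilityMeasure μ] (hsne : (msupp μ).Nonempty)
    (hap : StrictlyAperiodic μ) (η : ℝ) (hη : 0 < η) :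
    ∃ N : ℕ, ∀ z : A, ∃ p ∈ nsum (N+1) (msupp μ), dist z p ≤ η := by
  obtain ⟨b, hb⟩ := hsne
  set S := msupp μ with hS
  set T := (fun s => s - b) '' S with hT
  have h0T : (0:A) ∈ T := ⟨b, hb, sub_self b⟩
  set H := closure (⋃ n, nsum (n+1) T) with hH
  have hTH : T ⊆ H := by
    intro t ht
    apply subset_closure
    apply Set.mem_iUnion.mpr ⟨0, ?_⟩
    show t ∈ T + nsum 0 T
    exact ⟨t, ht, 0, rfl, add_zero t⟩
  have hHuniv : H = Set.univ := by
    have hD : {x : A | ∃ a ∈ msupp μ, ∃ b' ∈ msupp μ, x = a - b'} ⊆ H := by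
      rintro x ⟨a, ha, b', hb', rfl⟩
      have h1 : a - b ∈ H := hTH ⟨a, ha, rfl⟩
      have h2 : b' - b ∈ H := hTH ⟨b', hb', rfl⟩
      have h3 : -(b' - b) ∈ H := neg_mem_H hd h2
      have h4 : (a - b) + -(b' - b) ∈ H := H_add_mem hd h1 h3
      have : (a - b) + -(b' - b) = a - b' := by abel
      rwa [this] at h4
    set Hsg : AddSubsemigroup A := ⟨H, fun hu hv => H_add_mem hd hu hv⟩ with hHsg
    have hle : AddSubsemigroup.closure {x : A | ∃ a ∈ msupp μ, ∃ b' ∈ msupp μ, x = a - b'} ≤ Hsg :=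
      AddSubsemigroup.closure_le.mpr hD
    have hsub : (AddSubsemigroup.closure
        {x : A | ∃ a ∈ msupp μ, ∃ b' ∈ msupp μ, x = a - b'} : Set A) ⊆ H := hle
    have := closure_minimal hsub isClosed_closure
    rw [StrictlyAperiodic] at hap
    rw [hap] at this
    exact Set.eq_univ_of_univ_subset this
  set W : ℕ → Set A := fun n => ⋃ p ∈ nsum (n+1) T, Metric.ball p η with hW
  have hWopen : ∀ n, IsOpen (W n) := fun n => isOpen_biUnion (fun _ _ => Metric.isOpen_ball)
  have hWcover : Set.univ ⊆ ⋃ n, W n := by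
    intro x _
    have hx : x ∈ H := by rw [hHuniv]; trivial
    rw [hH, Metric.mem_closure_iff] at hx
    obtain ⟨y, hy, hxy⟩ := hx η hη
    obtain ⟨n, hn⟩ := Set.mem_iUnion.mp hy
    exact Set.mem_iUnion.mpr ⟨n, Set.mem_biUnion hn (by simpa [Metric.mem_ball, dist_comm] using hxy)⟩
  obtain ⟨t, ht⟩ := isCompact_univ.elim_finite_subcover W hWopen hWcover
  set N := t.sup id with hN
  refine ⟨N, fun z => ?_⟩
  have hz : z - (N+1) • b ∈ ⋃ n ∈ t, W n := ht trivial
  obtain ⟨n, hnt, hzn⟩ := Set.mem_iUnion₂.mp hz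
  obtain ⟨p, hp, hdist⟩ := Set.mem_iUnion₂.mp hzn
  have hpN : p ∈ nsum (N+1) T := nsum_mono h0T (Finset.le_sup (f := id) hnt) hp
  refine ⟨p + (N+1) • b, nsum_shift hb hpN, ?_⟩
  have : dist z (p + (N+1) • b) = dist (z - (N+1) • b) p := by
    conv_lhs => rw [show z = (z - (N+1) • b) + (N+1) • b by abel]
    rw [hd ((N+1) • b)]
  rw [this]
  rw [Metric.mem_ball] at hdist
  exact le_of_lt hdist

-- representation lemma
lemma rep_lemma {ι : Type*} [DecidableEq ι] (S : Set A) (δ : ℝ)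
    (ν : ι → Measure A) :
    ∀ (k : ℕ) (p : A), p ∈ nsum k S → ∀ (G : Finset ι), G.card = k →
      (∀ i ∈ G, ∀ s ∈ S, ∃ q ∈ msupp (ν i), dist s q ≤ δ) →
      ∃ q : ι → A, (∀ i ∈ G, q i ∈ msupp (ν i)) ∧ dist p (∑ i ∈ G, q i) ≤ k * δ := by
  intro k
  induction k with
  | zero =>
      intro p hp G hG _
      simp only [nsum, Set.mem_singleton_iff] at hp
      subst hp
      rw [Finset.card_eq_zero] at hG
      subst hG
      exact ⟨fun _ => 0, by simp, by simp⟩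
  | succ n ih =>
      intro p hp G hG hgood
      obtain ⟨s, hs, p', hp', rfl⟩ := hp
      have hGne : G.Nonempty := Finset.card_pos.mp (by omega)
      obtain ⟨i₀, hi₀⟩ := hGne
      have hG' : (G.erase i₀).card = n := by
        rw [Finset.card_erase_of_mem hi₀, hG]
        omega
      obtain ⟨q', hq'mem, hq'dist⟩ := ih p' hp' (G.erase i₀) hG'
        (fun i hi => hgood i (Finset.mem_of_mem_erase hi))
      obtain ⟨q₀, hq₀mem, hq₀dist⟩ := hgood i₀ hi₀ s hs
      set q : ι → A := fun i => if i = i₀ then q₀ else q' i with hq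
      have hsum : ∑ i ∈ G, q i = q₀ + ∑ i ∈ G.erase i₀, q' i := by
        rw [← Finset.add_sum_erase G q hi₀]
        congr 1
        · simp [hq]
        · apply Finset.sum_congr rfl
          intro i hi
          have : i ≠ i₀ := Finset.ne_of_mem_erase hi
          simp [hq, this]
      refine ⟨q, ?_, ?_⟩
      · intro i hi
        by_cases h : i = i₀
        · subst h; simpa [hq]
        · have : i ∈ G.erase i₀ := Finset.mem_erase.mpr ⟨h, hi⟩
          simpa [hq, h] using hq'mem i this
      · rw [hsum]
        calc dist (s + p') (q₀ + ∑ i ∈ G.erase i₀, q' i)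
            ≤ dist s q₀ + dist p' (∑ i ∈ G.erase i₀, q' i) := dist_add_add hd _ _ _ _
          _ ≤ δ + n * δ := add_le_add hq₀dist hq'dist
          _ = ((n:ℝ)+1) * δ := by ring
          _ = ((n+1 : ℕ) : ℝ) * δ := by push_cast; ring

end aux2

section aux3
variable {A : Type*} [MeasurableSpace A] [MetricSpace A] [AddCommGroup A]
    [IsTopologicalAddGroup A] [CompactSpace A] [BorelSpace A]

lemma cont_integral (f : BoundedContinuousFunction A ℝ) :
    Continuous (fun ν : ProbabilityMeasure A => ∫ z, f z ∂(ν : Measure A)) := by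
  rw [continuous_iff_continuousAt]
  intro μ
  exact (ProbabilityMeasure.tendsto_iff_forall_integral_tendsto.mp (tendsto_id (x := 𝓝 μ))) f

lemma claimB (μ : ProbabilityMeasure A) (δ : ℝ) (hδ : 0 < δ) :
    ∃ U : Set (ProbabilityMeasure A), IsOpen U ∧ μ ∈ U ∧
      ∀ ν ∈ U, ∀ s ∈ msupp (μ : Measure A), ∃ q ∈ msupp (ν : Measure A), dist s q ≤ δ := by
  set S := msupp (μ : Measure A) with hS
  have hScomp : IsCompact S := (msupp_isClosed _).isCompact
  obtain ⟨t, hcov⟩ := hScomp.elim_nhds_subcover' (fun y _ => Metric.ball y (δ/4))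
    (fun y hy => Metric.ball_mem_nhds y (by linarith))
  set F : A → BoundedContinuousFunction A ℝ := fun y =>
    BoundedContinuousFunction.mkOfCompact ⟨fun z => max (1 - (4/δ) * dist z y) 0, by continuity⟩
    with hF
  have hF0 : ∀ y z, 0 ≤ F y z := fun y z => le_max_right _ _
  have hFsupp : ∀ y z, F y z ≠ 0 → dist z y < δ/4 := by
    intro y z hz
    by_contra hge
    push_neg at hge
    apply hz
    simp only [hF, BoundedContinuousFunction.mkOfCompact, ContinuousMap.coe_mk]
    have : 1 - (4/δ) * dist z y ≤ 0 := by
      have h4 : (4/δ) * (δ/4) ≤ (4/δ) * dist z y := by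
        apply mul_le_mul_of_nonneg_left hge (by positivity)
      have : (4/δ) * (δ/4) = 1 := by field_simp
      linarith
    exact max_eq_right this
  have hFhalf : ∀ y z, dist z y < δ/8 → (1/2:ℝ) ≤ F y z := by
    intro y z hz
    have h4 : (4/δ) * dist z y ≤ (4/δ) * (δ/8) := by
      apply mul_le_mul_of_nonneg_left (le_of_lt hz) (by positivity)
    have he : (4/δ) * (δ/8) = 1/2 := by field_simp; ring
    have : (1/2:ℝ) ≤ 1 - (4/δ) * dist z y := by rw [he] at h4; linarith
    exact le_trans this (le_max_left _ _)
  set U : Set (ProbabilityMeasure A) :=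
    ⋂ y ∈ t, {ν : ProbabilityMeasure A | 0 < ∫ z, F y z ∂(ν : Measure A)} with hU
  refine ⟨U, ?_, ?_, ?_⟩
  · apply isOpen_biInter_finset
    intro y _
    exact isOpen_Ioi.preimage (cont_integral (F ↑y))
  · rw [hU]
    apply Set.mem_iInter₂.mpr
    intro y _
    have hball : 0 < (μ : Measure A) (Metric.ball ↑y (δ/8)) :=
      y.2 _ (Metric.mem_ball_self (by linarith)) Metric.isOpen_ball
    have hint : Integrable (fun z => F ↑y z) (μ : Measure A) :=
      (F ↑y).integrable _
    have h1 : ∫ z in Metric.ball ↑y (δ/8), (1/2 : ℝ) ∂(μ : Measure A)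
        ≤ ∫ z in Metric.ball ↑y (δ/8), F ↑y z ∂(μ : Measure A) := by
      apply setIntegral_mono_on (integrableOn_const (measure_ne_top _ _))
        hint.integrableOn Metric.isOpen_ball.measurableSet
      intro z hz
      exact hFhalf _ _ (Metric.mem_ball.mp hz)
    have h2 : ∫ z in Metric.ball ↑y (δ/8), F ↑y z ∂(μ : Measure A)
        ≤ ∫ z, F ↑y z ∂(μ : Measure A) :=
      setIntegral_le_integral hint (Filter.Eventually.of_forall (hF0 _))
    have h3 : (0:ℝ) < ∫ z in Metric.ball ↑y (δ/8), (1/2:ℝ) ∂(μ : Measure A) := by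
      rw [setIntegral_const]
      simp only [smul_eq_mul]
      apply mul_pos _ (by norm_num)
      exact ENNReal.toReal_pos hball.ne' (measure_ne_top _ _)
    show 0 < ∫ z, F ↑y z ∂(μ : Measure A)
    linarith
  · intro ν hν s hs
    have hsy : ∃ y ∈ t, s ∈ Metric.ball (y:A) (δ/4) := by
      have := hcov hs
      simpa using Set.mem_iUnion₂.mp this
    obtain ⟨y, hyt, hsy⟩ := hsy
    have hpos : 0 < ∫ z, F ↑y z ∂(ν : Measure A) := by
      rw [hU] at hν
      exact Set.mem_iInter₂.mp hν y hyt
    have hballν : (ν : Measure A) (Metric.ball ↑y (δ/4)) ≠ 0 := by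
      intro h0
      have hae : (fun z => F ↑y z) =ᵐ[(ν : Measure A)] 0 := by
        rw [Filter.EventuallyEq, ae_iff]
        apply measure_mono_null _ h0
        intro z hz
        simp only [Set.mem_setOf_eq, Pi.zero_apply] at hz
        exact Metric.mem_ball.mpr (hFsupp _ _ hz)
      rw [integral_congr_ae hae] at hpos
      simp at hpos
    have hq : ∃ q ∈ msupp (ν : Measure A), dist q (y:A) ≤ δ/2 := by
      by_contra hno
      push_neg at hno
      have : (ν : Measure A) (Metric.closedBall (y:A) (δ/4)) = 0 := by
        apply msupp_compact_null (isCompact_closedBall _ _)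
        intro q hqC hqm
        have := hno q hqm
        have h2 : dist q (y:A) ≤ δ/4 := Metric.mem_closedBall.mp hqC
        linarith
      exact hballν (measure_mono_null Metric.ball_subset_closedBall this)
    obtain ⟨q, hqm, hqd⟩ := hq
    refine ⟨q, hqm, ?_⟩
    have h1 : dist s (y:A) < δ/4 := Metric.mem_ball.mp hsy
    calc dist s q ≤ dist s (y:A) + dist (y:A) q := dist_triangle _ _ _
      _ ≤ δ/4 + δ/2 := by rw [dist_comm (y:A) q]; linarith
      _ ≤ δ := by linarith

end aux3

theorem stmt8 {A : Type*} [MeasurableSpace A] [MetricSpace A] [AddCommGroup A]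
    [IsTopologicalAddGroup A] [CompactSpace A] [BorelSpace A]
    (hd : ∀ a x y : A, dist (x + a) (y + a) = dist x y)
    (K : Set (ProbabilityMeasure A)) (hK : IsCompact K)
    (hap : ∀ μ ∈ K, StrictlyAperiodic (μ : Measure A))
    (ε : ℝ) (hε : 0 < ε) :
    ∃ m : ℕ, ∀ μs : Fin m → ProbabilityMeasure A, (∀ i, μs i ∈ K) →
      ∀ x : A, ∃ y ∈ msupp (mconvProd (List.ofFn fun i => (μs i : Measure A))),
        dist x y ≤ ε := by
  classical
  rcases Set.eq_empty_or_nonempty K with hKe | hKne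
  · refine ⟨1, fun μs hμs => absurd (hμs 0) (by simp [hKe])⟩
  -- choices for each μ ∈ K
  have hchoice : ∀ μ : ProbabilityMeasure A, μ ∈ K → ∃ N : ℕ,
      ∃ U : Set (ProbabilityMeasure A), IsOpen U ∧ μ ∈ U ∧
      (∀ z : A, ∃ p ∈ nsum (N+1) (msupp (μ : Measure A)), dist z p ≤ ε/4) ∧
      (∀ ν ∈ U, ∀ s ∈ msupp (μ : Measure A), ∃ q ∈ msupp (ν : Measure A),
          dist s q ≤ ε/(4*(N+1))) := by
    intro μ hμ
    obtain ⟨N, hN⟩ := claimA hd (μ : Measure A) (msupp_nonempty _) (hap μ hμ) (ε/4) (by linarith)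
    obtain ⟨U, hUo, hUm, hUg⟩ := claimB μ (ε/(4*(N+1))) (by positivity)
    exact ⟨N, U, hUo, hUm, hN, hUg⟩
  choose N U hUo hUm hdense hgood using hchoice
  obtain ⟨t, ht⟩ := hK.elim_nhds_subcover' (fun μ hμ => U μ hμ)
    (fun μ hμ => (hUo μ hμ).mem_nhds (hUm μ hμ))
  have htne : t.Nonempty := by
    obtain ⟨μ₀, hμ₀⟩ := hKne
    obtain ⟨j, hj, _⟩ := Set.mem_iUnion₂.mp (ht hμ₀)
    exact ⟨j, hj⟩
  set m := ∑ j ∈ t, (N j.1 j.2 + 1) with hm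
  refine ⟨m, fun μs hμs x => ?_⟩
  -- classify
  have hcl : ∀ i : Fin m, ∃ j : ↥K, j ∈ t ∧ μs i ∈ U j.1 j.2 := by
    intro i
    obtain ⟨j, hj, hji⟩ := Set.mem_iUnion₂.mp (ht (hμs i))
    exact ⟨j, hj, hji⟩
  choose c hct hcU using hcl
  -- pigeonhole
  have hpig : ∃ j ∈ t, N j.1 j.2 + 1 ≤ (Finset.univ.filter (fun i => c i = j)).card := by
    by_contra hno
    push_neg at hno
    have hcard : (Finset.univ : Finset (Fin m)).card
        = ∑ j ∈ t, (Finset.univ.filter (fun i => c i = j)).card :=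
      Finset.card_eq_sum_card_fiberwise (fun i _ => hct i)
    rw [Finset.card_univ, Fintype.card_fin] at hcard
    have hlt : ∑ j ∈ t, (Finset.univ.filter (fun i => c i = j)).card
        < ∑ j ∈ t, (N j.1 j.2 + 1) :=
      Finset.sum_lt_sum_of_nonempty htne (fun j hj => hno j hj)
    rw [← hcard, ← hm] at hlt
    exact lt_irrefl _ hlt
  obtain ⟨j, hjt, hjcard⟩ := hpig
  obtain ⟨F', hF'sub, hF'card⟩ := Finset.exists_subset_card_eq hjcard
  -- basepoints
  have hbase : ∀ i : Fin m, ∃ b : A, b ∈ msupp (μs i : Measure A) :=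
    fun i => msupp_nonempty _
  choose b hb using hbase
  set cst := ∑ i ∈ F'ᶜ, b i with hcst
  set z := x - cst with hz
  obtain ⟨p, hp, hpz⟩ := hdense j.1 j.2 z
  -- rep
  have hgoodF : ∀ i ∈ F', ∀ s ∈ msupp ((j : ProbabilityMeasure A) : Measure A),
      ∃ q ∈ msupp (μs i : Measure A), dist s q ≤ ε/(4*(N j.1 j.2 + 1)) := by
    intro i hi s hs
    have hcij : c i = j := (Finset.mem_filter.mp (hF'sub hi)).2
    have := hcU i
    rw [hcij] at this
    exact hgood j.1 j.2 (μs i) this s hs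
  obtain ⟨q, hqmem, hqdist⟩ := rep_lemma hd (msupp ((j : ProbabilityMeasure A) : Measure A))
    (ε/(4*(N j.1 j.2 + 1))) (fun i => (μs i : Measure A)) (N j.1 j.2 + 1) p hp F' hF'card hgoodF
  -- assemble point
  set Q : Fin m → A := fun i => if i ∈ F' then q i else b i with hQ
  have hQmem : ∀ i, Q i ∈ msupp (μs i : Measure A) := by
    intro i
    by_cases h : i ∈ F'
    · simpa [hQ, h] using hqmem i h
    · simpa [hQ, h] using hb i
  refine ⟨∑ i, Q i, mem_msupp_mconvProd μs Q hQmem, ?_⟩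
  have hsplit : ∑ i, Q i = (∑ i ∈ F', q i) + cst := by
    rw [← Finset.sum_add_sum_compl F' Q]
    congr 1
    · exact Finset.sum_congr rfl (fun i hi => by simp [hQ, hi])
    · exact Finset.sum_congr rfl (fun i hi => by
        simp only [hQ]
        rw [if_neg (Finset.mem_compl.mp hi)])
  rw [hsplit]
  have hxz : x = z + cst := by rw [hz]; abel
  have hdeq : dist x ((∑ i ∈ F', q i) + cst) = dist z (∑ i ∈ F', q i) := by
    conv_lhs => rw [hxz]
    rw [hd cst]
  rw [hdeq]
  have hbound : (↑(N j.1 j.2 + 1) : ℝ) * (ε/(4*(N j.1 j.2 + 1))) = ε/4 := by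
    field_simp
    push_cast
    ring
  calc dist z (∑ i ∈ F', q i) ≤ dist z p + dist p (∑ i ∈ F', q i) := dist_triangle _ _ _
    _ ≤ ε/4 + ε/4 := by
        refine add_le_add hpz ?_
        rw [← hbound]
        exact hqdist
    _ ≤ ε := by linarith
end

section
/- On the circle ℝ/ℤ, fix an irrational α ∈ (0,1) and define μ_n = (1/2)δ_0 + (1/2)δ_{α/2^n}. Then each μ_n is strictly aperiodic, but for every n the support of μ_n * μ_{n−1} * … * μ₁ is contained in the image of the interval [0, α] in ℝ/ℤ; in particular, the weak-* limit of μ_n * … * μ₁ (if it exists) is not the Haar (Lebesgue) measure on ℝ/ℤ. -/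
open MeasureTheory Topology Filter Pointwise

open scoped NNReal ENNReal

noncomputable def μ13 (α : ℝ) (n : ℕ) : Measure (AddCircle (1 : ℝ)) :=
  (1 / 2 : ℝ≥0∞) • Measure.dirac 0 +
    (1 / 2 : ℝ≥0∞) • Measure.dirac ((α / 2 ^ n : ℝ) : AddCircle (1 : ℝ))

/-!
The measure `μ_m` charges the points `0` and `α / 2 ^ m`, so the semigroup generated by the
differences of its support contains `± α / 2 ^ m` and hence all integer multiples of the
irrational point `α / 2 ^ m`, which are dense in the circle. On the other hand `μ_m` lives on the
arc `[0, α / 2 ^ m]`, and two copies of that arc add up to `[0, α / 2 ^ (m - 1)]`, so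
`μ_n * ⋯ * μ_1` lives on the arc `[0, α]`. As `α < 1`, this arc misses an open set; the distance
to the arc is then a continuous function whose integral vanishes against every `μ_n * ⋯ * μ_1`
but is positive against Lebesgue measure.
-/

open Set Metric

theorem AddSubsemigroup.zsmul_mem_of_mem_of_neg_mem {G : Type*} [AddGroup G]
    (S : AddSubsemigroup G) {x : G} (hx : x ∈ S) (hx' : -x ∈ S) (k : ℤ) : k • x ∈ S := by
  induction k using Int.induction_on with
  | zero => simpa using S.add_mem hx hx'
  | succ k ih => rw [add_one_zsmul]; exact S.add_mem ih hx
  | pred k ih => rw [sub_one_zsmul]; exact S.add_mem ih hx'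

theorem mem_msupp_of_measure_singleton_pos {X : Type*} [TopologicalSpace X] [MeasurableSpace X]
    {μ : Measure X} {x : X} (h : 0 < μ {x}) : x ∈ msupp μ :=
  fun _ hx _ => h.trans_le (measure_mono (singleton_subset_iff.2 hx))

theorem msupp_subset_of_ae_mem {X : Type*} [TopologicalSpace X] [MeasurableSpace X]
    {μ : Measure X} {K : Set X} (hK : IsClosed K) (h : ∀ᵐ x ∂μ, x ∈ K) : msupp μ ⊆ K := by
  intro x hx
  by_contra hxK
  exact (hx Kᶜ hxK hK.isOpen_compl).ne' h

theorem strictlyAperiodic_of_denseRange_zsmul {A : Type*} [MeasurableSpace A] [TopologicalSpace A]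
    [AddGroup A] {μ : Measure A} {a b : A} (ha : a ∈ msupp μ) (hb : b ∈ msupp μ)
    (hdense : DenseRange (· • (a - b) : ℤ → A)) : StrictlyAperiodic μ := by
  set S := AddSubsemigroup.closure {x : A | ∃ a ∈ msupp μ, ∃ b ∈ msupp μ, x = a - b}
  have hmem : a - b ∈ S := AddSubsemigroup.subset_closure ⟨a, ha, b, hb, rfl⟩
  have hneg : -(a - b) ∈ S := AddSubsemigroup.subset_closure ⟨b, hb, a, ha, neg_sub a b⟩
  refine (hdense.mono ?_).closure_eq
  rintro _ ⟨k, rfl⟩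
  exact S.zsmul_mem_of_mem_of_neg_mem hmem hneg k

theorem ae_mem_mconv {A : Type*} [MeasurableSpace A] [Add A] [MeasurableAdd₂ A]
    {μ ν : Measure A} {s t u : Set A} (hu : MeasurableSet u) (hs : ∀ᵐ x ∂μ, x ∈ s)
    (ht : ∀ᵐ y ∂ν, y ∈ t) (hst : s + t ⊆ u) : ∀ᵐ z ∂mconv μ ν, z ∈ u := by
  refine (ae_map_iff measurable_add.aemeasurable hu).2 ?_
  filter_upwards [Measure.quasiMeasurePreserving_fst.ae hs,
    Measure.quasiMeasurePreserving_snd.ae ht] with p hp₁ hp₂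
  exact hst (add_mem_add hp₁ hp₂)

theorem ae_mem_mconvProd_ofFn {A : Type*} [MeasurableSpace A] [AddMonoid A] [MeasurableAdd₂ A]
    (f : ℕ → Measure A) (K : ℕ → Set A) (hK : ∀ m, MeasurableSet (K m)) (hK₀ : ∀ m, 0 ∈ K m)
    (hKadd : ∀ m, K (m + 1) + K (m + 1) ⊆ K m) (hf : ∀ m, ∀ᵐ x ∂f (m + 1), x ∈ K (m + 1))
    (n : ℕ) : ∀ᵐ x ∂mconvProd (List.ofFn fun i : Fin n => f (i + 1)), x ∈ K 0 := by
  induction n generalizing f K with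
  | zero => exact (ae_dirac_iff (hK 0)).2 (hK₀ 0)
  | succ n ih =>
    rw [List.ofFn_succ, mconvProd]
    exact ae_mem_mconv (hK 0) (hf 0) (ih (fun m => f (m + 1)) (fun m => K (m + 1))
      (fun m => hK _) (fun m => hK₀ _) (fun m => hKadd _) (fun m => hf _)) (hKadd 0)

theorem integral_infDist_eq_zero_of_ae_mem {X : Type*} [PseudoMetricSpace X] [MeasurableSpace X]
    {μ : Measure X} {K : Set X} (h : ∀ᵐ x ∂μ, x ∈ K) : ∫ x, infDist x K ∂μ = 0 :=
  integral_eq_zero_of_ae (h.mono fun _ hx => infDist_zero_of_mem hx)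

theorem integral_infDist_pos {X : Type*} [PseudoMetricSpace X] [CompactSpace X]
    [MeasurableSpace X] [OpensMeasurableSpace X] (μ : Measure X) [IsFiniteMeasure μ]
    [μ.IsOpenPosMeasure] {K : Set X} (hK : IsClosed K) (hne : K.Nonempty) (hK' : K ≠ univ) :
    0 < ∫ x, infDist x K ∂μ := by
  have hint : Integrable (fun x => infDist x K) μ :=
    (continuous_infDist_pt K).integrable_of_hasCompactSupport (HasCompactSupport.of_compactSpace _)
  rw [integral_pos_iff_support_of_nonneg (fun _ => infDist_nonneg) hint]
  refine (hK.isOpen_compl.measure_pos μ (nonempty_compl.2 hK')).trans_le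
    (measure_mono fun x hx => ?_)
  exact ((hK.notMem_iff_infDist_pos hne).1 hx).ne'

theorem not_tendsto_integral_of_ae_mem {X : Type*} [PseudoMetricSpace X] [CompactSpace X]
    [MeasurableSpace X] [OpensMeasurableSpace X] (μ : Measure X) [IsFiniteMeasure μ]
    [μ.IsOpenPosMeasure] (μs : ℕ → Measure X) {K : Set X} (hK : IsClosed K) (hne : K.Nonempty)
    (hK' : K ≠ univ) (hμs : ∀ n, ∀ᵐ x ∂μs n, x ∈ K) :
    ¬ ∀ φ : C(X, ℝ), Tendsto (fun n => ∫ x, φ x ∂μs n) atTop (𝓝 (∫ x, φ x ∂μ)) := by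
  intro h
  have hlim := h ⟨fun x => infDist x K, continuous_infDist_pt K⟩
  simp only [ContinuousMap.coe_mk, integral_infDist_eq_zero_of_ae_mem (hμs _)] at hlim
  exact (integral_infDist_pos μ hK hne hK').ne (tendsto_nhds_unique tendsto_const_nhds hlim)

namespace AddCircle

def arc (p a : ℝ) : Set (AddCircle p) := ((↑) : ℝ → AddCircle p) '' Icc 0 a

variable {p : ℝ}

theorem isClosed_arc (a : ℝ) : IsClosed (arc p a) :=
  (isCompact_Icc.image (AddCircle.continuous_mk' p)).isClosed

theorem zero_mem_arc {a : ℝ} (ha : 0 ≤ a) : 0 ∈ arc p a := ⟨0, left_mem_Icc.2 ha, rfl⟩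

theorem coe_mem_arc {a : ℝ} (ha : 0 ≤ a) : (a : AddCircle p) ∈ arc p a :=
  ⟨a, right_mem_Icc.2 ha, rfl⟩

theorem arc_add_arc_subset (a b : ℝ) : arc p a + arc p b ⊆ arc p (a + b) := by
  rintro _ ⟨_, ⟨s, hs, rfl⟩, _, ⟨t, ht, rfl⟩, rfl⟩
  exact ⟨s + t, ⟨add_nonneg hs.1 ht.1, add_le_add hs.2 ht.2⟩, coe_add p s t⟩

theorem arc_ne_univ [Fact (0 < p)] {a : ℝ} (ha : a < p) : arc p a ≠ univ := by
  intro h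
  obtain ⟨s, hs, hs'⟩ : (((a + p) / 2 : ℝ) : AddCircle p) ∈ arc p a := h ▸ mem_univ _
  have hp := (Fact.out : 0 < p)
  rw [coe_eq_coe_iff_of_mem_Ico (a := 0) ⟨hs.1, by linarith [hs.2]⟩
    ⟨by linarith [hs.1, hs.2], by linarith⟩] at hs'
  linarith [hs.2]

end AddCircle

open AddCircle

theorem strictlyAperiodic_μ13 {α : ℝ} (hα : Irrational α) (n : ℕ) :
    StrictlyAperiodic (μ13 α n) := by
  refine strictlyAperiodic_of_denseRange_zsmul (b := 0)
    (mem_msupp_of_measure_singleton_pos (x := ((α / 2 ^ n : ℝ) : AddCircle (1 : ℝ)))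
      (by simp [μ13]))
    (mem_msupp_of_measure_singleton_pos (by simp [μ13])) ?_
  rw [sub_zero, denseRange_zsmul_coe_iff, div_one]
  simpa using hα.div_natCast (pow_ne_zero n two_ne_zero)

theorem ae_mem_arc_μ13 {α : ℝ} (hα : 0 ≤ α) (n : ℕ) :
    ∀ᵐ x ∂μ13 α n, x ∈ arc 1 (α / 2 ^ n) := by
  have hα' : 0 ≤ α / 2 ^ n := by positivity
  simp [μ13, zero_mem_arc hα', coe_mem_arc hα']

theorem ae_mem_arc_mconvProd_μ13 {α : ℝ} (hα : 0 ≤ α) (n : ℕ) :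
    ∀ᵐ x ∂mconvProd (List.ofFn fun i : Fin n => μ13 α (i + 1)), x ∈ arc 1 α := by
  simpa using ae_mem_mconvProd_ofFn (μ13 α) (fun m => arc 1 (α / 2 ^ m))
    (fun m => (isClosed_arc _).measurableSet) (fun m => zero_mem_arc (by positivity))
    (fun m => (arc_add_arc_subset _ _).trans_eq (by congr 1; ring))
    (fun m => ae_mem_arc_μ13 hα (m + 1)) n

theorem stmt13 (α : ℝ) (hα : Irrational α) (hα0 : 0 < α) (hα1 : α < 1) :
    (∀ n : ℕ, 1 ≤ n → StrictlyAperiodic (μ13 α n)) ∧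
    (∀ n : ℕ, msupp (mconvProd (List.ofFn fun i : Fin n => μ13 α (i + 1))) ⊆
        (fun x : ℝ => (x : AddCircle (1 : ℝ))) '' Set.Icc 0 α) ∧
    ∀ ν : Measure (AddCircle (1 : ℝ)),
      (∀ φ : C(AddCircle (1 : ℝ), ℝ),
        Tendsto (fun n : ℕ =>
            ∫ x, φ x ∂(mconvProd (List.ofFn fun i : Fin n => μ13 α (i + 1))))
          atTop (𝓝 (∫ x, φ x ∂ν))) →
      ν ≠ volume := by
  refine ⟨fun n _ => strictlyAperiodic_μ13 hα n,
    fun n => msupp_subset_of_ae_mem (isClosed_arc α) (ae_mem_arc_mconvProd_μ13 hα0.le n), ?_⟩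
  rintro ν hν rfl
  exact not_tendsto_integral_of_ae_mem volume _ (isClosed_arc α) ⟨0, zero_mem_arc hα0.le⟩
    (arc_ne_univ hα1) (ae_mem_arc_mconvProd_μ13 hα0.le) hν
end
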